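/- Suppose m ≡ 2 (mod 4) and j ∈ J with j_n ≥ 3. Let p = ⌊j_n/3⌋ and define the n-tuple j′ by j′_(n−1) = j_(n−1) + p, j′_n = j_n − 3p, and j′_k = j_k for all k ≤ n − 2. Then j′ ∈ J, j′_n < 3, and v(j) < v(j′). -/
import Mathlib


open Finset

/-- `s a` is the sum of the binary digits of `a`. -/
def sdig (a : ℕ) : ℕ := (Nat.digits 2 a).sum

/-- `carries a b` is the number of carries when adding `a` and `b` in base 2:
`c(a,b) = s(a) + s(b) - s(a+b)`. -/
def carries (a b : ℕ) : ℕ := sdig a + sdig b - sdig (a + b)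

/-- The generalized binomial coefficient `C_r(x) = x(x-1)⋯(x-r+1)/r!` (with `C_0(x) = 1`). -/
def genBinom (x : ℚ) (r : ℕ) : ℚ :=
  (∏ p ∈ Finset.range r, (x - p)) / (Nat.factorial r : ℚ)

/-- Membership in the index set `J`: here `j i` (for `i : Fin n`) is the paper's
`j_{i+1}`, so the defining relation `(2^n-1)j_1 + ⋯ + (2-1)j_n = m+1` becomes
`∑ k, (2^(n-k) - 1) * j k = m + 1`. -/
def inJ (n m : ℕ) (j : Fin n → ℕ) : Prop :=
  ∑ k : Fin n, (2 ^ (n - (k : ℕ)) - 1) * j k = m + 1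

/-- `α_j(k)`: for `K : Fin n`, `alphaF n m j K` is the paper's `α_j(K+1)`, i.e.
`m / 2^(n-K) - ∑_{I < K} 2^(K-I) j_{I+1}`. -/
def alphaF (n m : ℕ) (j : Fin n → ℕ) (K : Fin n) : ℚ :=
  (m : ℚ) / 2 ^ (n - (K : ℕ)) -
    ∑ I : Fin n, if (I : ℕ) < (K : ℕ) then 2 ^ ((K : ℕ) - (I : ℕ)) * (j I : ℚ) else 0

/-- `P(j) = ∏_{k=1}^n C_{j_k}(α_j(k))`. -/
def Pprod (n m : ℕ) (j : Fin n → ℕ) : ℚ :=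
  ∏ k : Fin n, genBinom (alphaF n m j k) (j k)

/-- `V(j) = -ν(P(j))`, where `ν` is the 2-adic valuation on `ℚ`. -/
def V (n m : ℕ) (j : Fin n → ℕ) : ℤ := - padicValRat 2 (Pprod n m j)

/-- `v(j) = ∑_{k=1}^{n-1} ((n-k+1) j_k - s(j_k))` (the case `ν(m) = 1`). -/
def vsum (n : ℕ) (j : Fin n → ℕ) : ℤ :=
  ∑ k : Fin n, if (k : ℕ) < n - 1 then ((n : ℤ) - (k : ℕ)) * j k - sdig (j k) else 0

lemma sdig_rec (n : ℕ) (h : n ≠ 0) : sdig n = n % 2 + sdig (n / 2) := by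
  unfold sdig
  rw [Nat.digits_def' (by norm_num : 1 < 2) (Nat.pos_of_ne_zero h)]
  simp

lemma sdig_le_self (n : ℕ) : sdig n ≤ n := by
  induction n using Nat.strong_induction_on with
  | _ n ih =>
    rcases Nat.eq_zero_or_pos n with h | h
    · simp [h, sdig]
    · rw [sdig_rec n h.ne']
      have := ih (n / 2) (Nat.div_lt_self h one_lt_two)
      omega

lemma sdig_succ_le (n : ℕ) : sdig (n + 1) ≤ sdig n + 1 := by
  induction n using Nat.strong_induction_on with
  | _ n ih =>
    rcases Nat.eq_zero_or_pos n with h | h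
    · subst h; simp [sdig]
    · rw [sdig_rec n h.ne', sdig_rec (n+1) (by omega)]
      rcases Nat.even_or_odd n with ⟨m, hm⟩ | ⟨m, hm⟩
      · subst hm
        have e1 : (m + m + 1) / 2 = m := by omega
        have e2 : (m + m) / 2 = m := by omega
        rw [e1, e2]; omega
      · subst hm
        have e1 : (2 * m + 1 + 1) / 2 = m + 1 := by omega
        have e2 : (2 * m + 1) / 2 = m := by omega
        rw [e1, e2]
        have := ih m (by omega)
        omega

lemma sdig_add_le (a b : ℕ) : sdig (a + b) ≤ sdig a + sdig b := by
  induction a using Nat.strong_induction_on generalizing b with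
  | _ a ih =>
    rcases Nat.eq_zero_or_pos a with ha | ha
    · simp [ha, sdig]
    rcases Nat.eq_zero_or_pos b with hb | hb
    · simp [hb, sdig]
    rw [sdig_rec a ha.ne', sdig_rec b hb.ne', sdig_rec (a+b) (by omega)]
    have hih := ih (a / 2) (Nat.div_lt_self ha one_lt_two) (b / 2)
    rcases Nat.even_or_odd (a + b) with ⟨c, hc⟩ | ⟨c, hc⟩
    · by_cases hpar : a % 2 = 1 ∧ b % 2 = 1
      · have e : (a + b) / 2 = a / 2 + b / 2 + 1 := by omega
        rw [e]
        have h1 := sdig_succ_le (a / 2 + b / 2)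
        omega
      · have e : (a + b) / 2 = a / 2 + b / 2 := by omega
        rw [e]; omega
    · have e : (a + b) / 2 = a / 2 + b / 2 := by omega
      rw [e]; omega

/-- Tuple transformation (Lemma 2.8 for `ν(m) = 1`): if `m ≡ 2 mod 4`, `j ∈ J`
with `j_n ≥ 3`, and `p = ⌊j_n/3⌋`, then the tuple `j'` obtained by adding `p`
to `j_{n-1}` and subtracting `3p` from `j_n` lies in `J`, has `j'_n < 3`, and
satisfies `v(j) < v(j')`. -/
theorem stmt9 (n m : ℕ) (hn : 3 ≤ n) (hm : 1 ≤ m) (hmn : m ≤ 2 ^ (n + 1) - 3)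
    (h4 : m % 4 = 2)
    (j : Fin n → ℕ) (hj : inJ n m j)
    (h3 : 3 ≤ j ⟨n - 1, by omega⟩)
    (p : ℕ) (hp : p = j ⟨n - 1, by omega⟩ / 3)
    (j' : Fin n → ℕ)
    (hj' : j' = fun k : Fin n =>
      if (k : ℕ) = n - 2 then j k + p
      else if (k : ℕ) = n - 1 then j k - 3 * p
      else j k) :
    inJ n m j' ∧ j' ⟨n - 1, by omega⟩ < 3 ∧ vsum n j < vsum n j' := by
  have hA : n - 2 < n := by omega
  have hB : n - 1 < n := by omega
  have h3' : 3 ≤ j ⟨n - 1, hB⟩ := h3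
  have hp' : p = j ⟨n - 1, hB⟩ / 3 := hp
  have hp1 : 1 ≤ p := by omega
  have h3p : 3 * p ≤ j ⟨n - 1, hB⟩ := by omega
  have hABne : (⟨n - 2, hA⟩ : Fin n) ≠ ⟨n - 1, hB⟩ := by
    intro h
    have := congrArg Fin.val h
    simp only [] at this
    omega
  have hj'A : j' ⟨n - 2, hA⟩ = j ⟨n - 2, hA⟩ + p := by
    rw [hj']
    exact if_pos rfl
  have hj'B : j' ⟨n - 1, hB⟩ = j ⟨n - 1, hB⟩ - 3 * p := by
    rw [hj']
    exact (if_neg (show ¬(n - 1 = n - 2) by omega)).trans (if_pos rfl)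
  have hj'other : ∀ k : Fin n, (k : ℕ) ≠ n - 2 → (k : ℕ) ≠ n - 1 → j' k = j k := by
    intro k h1 h2
    rw [hj']
    exact (if_neg h1).trans (if_neg h2)
  refine ⟨?_, ?_, ?_⟩
  · -- inJ
    show ∑ k : Fin n, (2 ^ (n - (k : ℕ)) - 1) * j' k = m + 1
    have h1 : ∀ k : Fin n, (((2 ^ (n - (k : ℕ)) - 1) * j' k : ℕ) : ℤ)
        = (((2 ^ (n - (k : ℕ)) - 1) * j k : ℕ) : ℤ)
          + ((if k = ⟨n - 2, hA⟩ then (3 * p : ℤ) else 0)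
            + (if k = ⟨n - 1, hB⟩ then -(3 * (p : ℤ)) else 0)) := by
      intro k
      by_cases hk1 : (k : ℕ) = n - 2
      · have hkA : k = ⟨n - 2, hA⟩ := Fin.ext hk1
        subst hkA
        rw [hj'A, if_pos rfl, if_neg hABne]
        have hw : 2 ^ (n - (n - 2)) - 1 = 3 := by
          have h2 : n - (n - 2) = 2 := by omega
          rw [h2]; decide
        rw [show ((⟨n - 2, hA⟩ : Fin n) : ℕ) = n - 2 from rfl, hw]
        push_cast
        ring
      · by_cases hk2 : (k : ℕ) = n - 1
        · have hkB : k = ⟨n - 1, hB⟩ := Fin.ext hk2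
          subst hkB
          rw [hj'B, if_neg (Ne.symm hABne), if_pos rfl]
          have hw : 2 ^ (n - (n - 1)) - 1 = 1 := by
            have h2 : n - (n - 1) = 1 := by omega
            rw [h2]; decide
          rw [show ((⟨n - 1, hB⟩ : Fin n) : ℕ) = n - 1 from rfl, hw]
          omega
        · have hne1 : k ≠ (⟨n - 2, hA⟩ : Fin n) := fun h => hk1 (congrArg Fin.val h)
          have hne2 : k ≠ (⟨n - 1, hB⟩ : Fin n) := fun h => hk2 (congrArg Fin.val h)
          rw [hj'other k hk1 hk2, if_neg hne1, if_neg hne2]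
          ring
    have h2 : ((∑ k : Fin n, (2 ^ (n - (k : ℕ)) - 1) * j' k : ℕ) : ℤ)
        = ((∑ k : Fin n, (2 ^ (n - (k : ℕ)) - 1) * j k : ℕ) : ℤ) := by
      rw [Nat.cast_sum, Nat.cast_sum]
      rw [Finset.sum_congr rfl (fun k _ => h1 k)]
      rw [Finset.sum_add_distrib, Finset.sum_add_distrib]
      rw [Finset.sum_ite_eq' Finset.univ (⟨n - 2, hA⟩ : Fin n) (fun _ => (3 * p : ℤ)),
        Finset.sum_ite_eq' Finset.univ (⟨n - 1, hB⟩ : Fin n) (fun _ => -(3 * (p : ℤ)))]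
      simp
    have h3'' : ∑ k : Fin n, (2 ^ (n - (k : ℕ)) - 1) * j' k
        = ∑ k : Fin n, (2 ^ (n - (k : ℕ)) - 1) * j k := Nat.cast_injective h2
    rw [h3'']
    exact hj
  · -- j'_n < 3
    show j' ⟨n - 1, hB⟩ < 3
    rw [hj'B]
    omega
  · -- vsum
    have hv : vsum n j' - vsum n j
        = 2 * (p : ℤ) + (sdig (j ⟨n - 2, hA⟩) : ℤ) - (sdig (j ⟨n - 2, hA⟩ + p) : ℤ) := by
      unfold vsum
      rw [← Finset.sum_sub_distrib]
      have hterm : ∀ k : Fin n,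
          ((if (k : ℕ) < n - 1 then ((n : ℤ) - (k : ℕ)) * j' k - sdig (j' k) else 0)
            - (if (k : ℕ) < n - 1 then ((n : ℤ) - (k : ℕ)) * j k - sdig (j k) else 0))
          = (if k = ⟨n - 2, hA⟩ then
              (2 * (p : ℤ) + (sdig (j ⟨n - 2, hA⟩) : ℤ) - (sdig (j ⟨n - 2, hA⟩ + p) : ℤ))
             else 0) := by
        intro k
        by_cases hk1 : (k : ℕ) = n - 2
        · have hkA : k = ⟨n - 2, hA⟩ := Fin.ext hk1
          subst hkA
          have hlt : ((⟨n - 2, hA⟩ : Fin n) : ℕ) < n - 1 := by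
            show n - 2 < n - 1; omega
          rw [if_pos rfl, if_pos hlt, if_pos hlt, hj'A]
          rw [show (((⟨n - 2, hA⟩ : Fin n) : ℕ) : ℤ) = ((n - 2 : ℕ) : ℤ) from rfl]
          have hc : ((n - 2 : ℕ) : ℤ) = (n : ℤ) - 2 := by omega
          rw [hc]
          have hpc : ((j ⟨n - 2, hA⟩ + p : ℕ) : ℤ)
              = (j ⟨n - 2, hA⟩ : ℤ) + (p : ℤ) := by push_cast; ring
          rw [hpc]
          ring
        · have hne : k ≠ (⟨n - 2, hA⟩ : Fin n) := fun h => hk1 (congrArg Fin.val h)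
          rw [if_neg hne]
          by_cases hk2 : (k : ℕ) < n - 1
          · rw [if_pos hk2, if_pos hk2, hj'other k hk1 (by omega)]
            ring
          · rw [if_neg hk2, if_neg hk2]
            ring
      rw [Finset.sum_congr rfl (fun k _ => hterm k)]
      rw [Finset.sum_ite_eq' Finset.univ (⟨n - 2, hA⟩ : Fin n)
        (fun _ => (2 * (p : ℤ) + (sdig (j ⟨n - 2, hA⟩) : ℤ) - (sdig (j ⟨n - 2, hA⟩ + p) : ℤ)))]
      simp
    have hD : (sdig (j ⟨n - 2, hA⟩ + p) : ℤ) ≤ (sdig (j ⟨n - 2, hA⟩) : ℤ) + p := by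
      have h1 := sdig_add_le (j ⟨n - 2, hA⟩) p
      have h2 := sdig_le_self p
      omega
    have hpos : 0 < vsum n j' - vsum n j := by rw [hv]; omega
    omega
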